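/- arXiv:1909.13288 — 2 statements merged into one kernel-verified Lean document; each statement's English description precedes it below -/
import Mathlib

section
/- For every α > 0, B(η, α) tends to −∞ as η → +∞ and as η → −∞; in particular, for every α > 0 there exists M > 0 such that B(η, α) < 0 whenever |η| ≥ M. -/
open Real MeasureTheory Set Filter

/-- `A k η = ∫_0^1 z^k e^{-η z²} dz`. -/
noncomputable def A (k : ℕ) (η : ℝ) : ℝ :=
  ∫ z in (0:ℝ)..1, z ^ k * Real.exp (-η * z ^ 2)

/-- `B(η, α) = 3 e^{-η} / A₀(η) − (3 − 2η + 4η²/α)`. -/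
noncomputable def B (η α : ℝ) : ℝ :=
  3 * Real.exp (-η) / A 0 η - (3 - 2 * η + 4 * η ^ 2 / α)

/-!
For `η ≥ 0`, `e^{-η z²} ≥ e^{-η}` on `[0, 1]`, so the first term of `B` is at most `3`. For `η < 0`,
the tangent line `z² ≥ 2z - 1` gives `A₀(η) ≥ (e^{-η} - e^{η}) / (-2η)`, so the first term is
`O(|η|)`. Hence `B(η, α) ≤ 14|η| - (4/α) η²` once `|η| ≥ 1`, and this tends to `-∞` as `|η| → ∞`.
-/

theorem integral_exp_mul_add {c : ℝ} (hc : c ≠ 0) (a b d : ℝ) :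
    ∫ z in a..b, exp (c * z + d) = (exp (c * b + d) - exp (c * a + d)) / c := by
  simp [intervalIntegral.integral_comp_mul_add (fun x => exp x) hc, integral_exp, div_eq_inv_mul]

theorem tendsto_mul_sub_mul_sq_atTop_atBot (a : ℝ) {b : ℝ} (hb : 0 < b) :
    Tendsto (fun r : ℝ => a * r - b * r ^ 2) atTop atBot := by
  have : Tendsto (fun r : ℝ => a - b * r) atTop atBot := by
    simpa [sub_eq_add_neg] using
      tendsto_atBot_add_const_left _ a (tendsto_id.const_mul_atTop_of_neg (neg_lt_zero.2 hb))
  refine (tendsto_id.atTop_mul_atBot₀ this).congr fun r => ?_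
  simp only [id]
  ring

lemma A_zero_eq (η : ℝ) : A 0 η = ∫ z in (0:ℝ)..1, exp (-η * z ^ 2) := by
  simp [A]

lemma A_zero_pos (η : ℝ) : 0 < A 0 η := by
  rw [A_zero_eq]
  exact intervalIntegral.intervalIntegral_pos_of_pos
    ((by fun_prop : Continuous fun z : ℝ => exp (-η * z ^ 2)).intervalIntegrable 0 1)
    (fun _ => exp_pos _) zero_lt_one

lemma exp_neg_le_A_zero {η : ℝ} (hη : 0 ≤ η) : exp (-η) ≤ A 0 η := by
  rw [A_zero_eq]
  calc exp (-η) = ∫ _ in (0:ℝ)..1, exp (-η) := by simp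
    _ ≤ ∫ z in (0:ℝ)..1, exp (-η * z ^ 2) := by
      refine intervalIntegral.integral_mono_on zero_le_one intervalIntegrable_const
        ((by fun_prop : Continuous fun z : ℝ => exp (-η * z ^ 2)).intervalIntegrable 0 1)
        fun z hz => exp_le_exp.2 ?_
      have : z ^ 2 ≤ 1 := pow_le_one₀ hz.1 hz.2
      nlinarith

lemma exp_sub_exp_div_le_A_zero {η : ℝ} (hη : η < 0) :
    (exp (-η) - exp η) / (-2 * η) ≤ A 0 η := by
  rw [A_zero_eq]
  calc (exp (-η) - exp η) / (-2 * η) = ∫ z in (0:ℝ)..1, exp (-2 * η * z + η) := by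
        rw [integral_exp_mul_add (by linarith)]; ring_nf
    _ ≤ ∫ z in (0:ℝ)..1, exp (-η * z ^ 2) := by
      refine intervalIntegral.integral_mono_on zero_le_one
        ((by fun_prop : Continuous fun z : ℝ => exp (-2 * η * z + η)).intervalIntegrable 0 1)
        ((by fun_prop : Continuous fun z : ℝ => exp (-η * z ^ 2)).intervalIntegrable 0 1)
        fun z _ => exp_le_exp.2 ?_
      nlinarith [mul_nonneg (neg_nonneg.2 hη.le) (sq_nonneg (z - 1))]

lemma exp_neg_div_A_zero_le {η : ℝ} (hη : 1 ≤ |η|) : exp (-η) / A 0 η ≤ 4 * |η| := by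
  have hA := A_zero_pos η
  rw [div_le_iff₀ hA]
  rcases le_or_gt 0 η with hη0 | hη0
  · rw [abs_of_nonneg hη0] at hη ⊢
    nlinarith [exp_neg_le_A_zero hη0]
  · rw [abs_of_neg hη0] at hη ⊢
    have hlow := exp_sub_exp_div_le_A_zero hη0
    rw [div_le_iff₀ (by linarith)] at hlow
    have h1 : exp η ≤ 1 := exp_le_one_iff.2 hη0.le
    have h2 : 2 ≤ exp (-η) := by linarith [add_one_le_exp (-η)]
    nlinarith

lemma B_le (α : ℝ) {η : ℝ} (hη : 1 ≤ |η|) : B η α ≤ 14 * |η| - 4 / α * |η| ^ 2 := by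
  have h := exp_neg_div_A_zero_le hη
  have : η ≤ |η| := le_abs_self η
  rw [B, sq_abs, mul_div_assoc, div_mul_eq_mul_div]
  linarith

/-- For every `α > 0`, `B(η, α) → −∞` as `η → ±∞`; in particular there exists
`M > 0` with `B(η, α) < 0` whenever `|η| ≥ M`. -/
theorem stmt_3 (α : ℝ) (hα : 0 < α) :
    Tendsto (fun η : ℝ => B η α) atTop atBot ∧
    Tendsto (fun η : ℝ => B η α) atBot atBot ∧
    ∃ M : ℝ, 0 < M ∧ ∀ η : ℝ, M ≤ |η| → B η α < 0 := by
  have hB : Tendsto (fun η : ℝ => B η α) (comap abs atTop) atBot := by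
    refine tendsto_atBot_mono' _ ?_
      ((tendsto_mul_sub_mul_sq_atTop_atBot 14 (by positivity : 0 < 4 / α)).comp tendsto_comap)
    filter_upwards [tendsto_comap.eventually (eventually_ge_atTop 1)] with η hη
    exact B_le α hη
  obtain ⟨M, -, hM⟩ :=
    (atTop_basis.comap abs).eventually_iff.1 (hB.eventually (eventually_lt_atBot 0))
  rw [comap_abs_atTop, tendsto_sup] at hB
  exact ⟨hB.2, hB.1, max M 1, by positivity, fun η hη => hM (le_trans (le_max_left _ _) hη)⟩
end

section
/- For every α > 0, the second partial derivative of B with respect to η at η = 0 equals B_ηη(0, α) = (16/(15α))(α − 15/2). In particular B_ηη(0, α) > 0 for α > 7.5, B_ηη(0, α) = 0 for α = 7.5, and B_ηη(0, α) < 0 for 0 < α < 7.5. -/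
open Real MeasureTheory Set Filter

/-! Differentiating under the integral sign gives `A_k' = -A_{k+2}`, and `A_k(0) = 1/(k+1)`.
Differentiating the quotient `3 e^{-η} / A_0` twice and evaluating at `η = 0` with
`A_0(0) = 1`, `A_2(0) = 1/3`, `A_4(0) = 1/5` gives `B_ηη(0, α) = 16/15 - 8/α`, whose sign is
that of `α - 15/2`. -/

lemma norm_pow_mul_exp_le (k : ℕ) (x : ℝ) {t : ℝ} (ht : t ∈ Icc (0 : ℝ) 1) :
    ‖t ^ k * exp (-x * t ^ 2)‖ ≤ exp |x| := by
  obtain ⟨ht₀, ht₁⟩ := ht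
  have hsq : t ^ 2 ≤ 1 := pow_le_one₀ ht₀ ht₁
  rw [norm_mul, norm_pow, norm_of_nonneg ht₀, norm_of_nonneg (exp_pos _).le]
  calc t ^ k * exp (-x * t ^ 2) ≤ 1 * exp |x| := by
        gcongr
        · exact pow_le_one₀ ht₀ ht₁
        · nlinarith [neg_abs_le x, abs_nonneg x, sq_nonneg t]
    _ = exp |x| := one_mul _

lemma hasDerivAt_pow_mul_exp (k : ℕ) (t x : ℝ) :
    HasDerivAt (fun x => t ^ k * exp (-x * t ^ 2)) (-(t ^ (k + 2) * exp (-x * t ^ 2))) x := by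
  have h : HasDerivAt (fun x => t ^ k * exp (-x * t ^ 2)) _ x :=
    (((hasDerivAt_neg x).mul_const (t ^ 2)).exp).const_mul (t ^ k)
  exact h.congr_deriv (by ring)

lemma hasDerivAt_A (k : ℕ) (η : ℝ) : HasDerivAt (A k) (-A (k + 2) η) η := by
  have hcont (j : ℕ) (x : ℝ) : Continuous fun t : ℝ => t ^ j * exp (-x * t ^ 2) := by fun_prop
  have hbound : ∀ᵐ t ∂volume, t ∈ uIoc (0 : ℝ) 1 → ∀ x ∈ Metric.ball η 1,
      ‖-(t ^ (k + 2) * exp (-x * t ^ 2))‖ ≤ exp (|η| + 1) := by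
    refine .of_forall fun t ht x hx => ?_
    rw [uIoc_of_le zero_le_one] at ht
    rw [norm_neg]
    refine (norm_pow_mul_exp_le _ x (Ioc_subset_Icc_self ht)).trans (exp_le_exp.2 ?_)
    have := abs_sub_abs_le_abs_sub x η
    rw [Metric.mem_ball, dist_eq] at hx
    linarith
  have := (intervalIntegral.hasDerivAt_integral_of_dominated_loc_of_deriv_le
    (Metric.ball_mem_nhds η one_pos) (.of_forall fun x => (hcont k x).aestronglyMeasurable)
    ((hcont k η).intervalIntegrable 0 1) ((hcont (k + 2) η).neg.aestronglyMeasurable)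
    hbound intervalIntegrable_const
    (.of_forall fun t _ x _ => hasDerivAt_pow_mul_exp k t x)).2
  rwa [intervalIntegral.integral_neg] at this

lemma A_pos (k : ℕ) (η : ℝ) : 0 < A k η :=
  intervalIntegral.intervalIntegral_pos_of_pos_on (Continuous.intervalIntegrable (by fun_prop) _ _)
    (fun _ ht => by have := ht.1; positivity) zero_lt_one

lemma A_zero (k : ℕ) : A k 0 = 1 / (k + 1) := by
  simp [A, integral_pow]

lemma deriv_B (α : ℝ) : deriv (fun η => B η α) =
    fun η => 3 * exp (-η) * (A 2 η - A 0 η) / A 0 η ^ 2 + 2 - 8 * η / α := by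
  ext η
  refine HasDerivAt.deriv ?_
  have h : HasDerivAt (fun η => B η α) _ η :=
    (((hasDerivAt_neg η).exp.const_mul 3).div (hasDerivAt_A 0 η) (A_pos 0 η).ne').sub
      ((((hasDerivAt_id η).const_mul 2).const_sub 3).add
        (((hasDerivAt_pow 2 η).const_mul 4).div_const α))
  refine h.congr_deriv ?_
  field_simp
  ring

lemma hasDerivAt_deriv_B_zero (α : ℝ) :
    HasDerivAt (deriv fun η => B η α) (16 / 15 - 8 / α) 0 := by
  rw [deriv_B]
  have hA0 := hasDerivAt_A 0 0
  have hA2 := hasDerivAt_A 2 0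
  have h : HasDerivAt (fun η => 3 * exp (-η) * (A 2 η - A 0 η) / A 0 η ^ 2 + 2 - 8 * η / α) _ 0 :=
    (((((hasDerivAt_neg (0:ℝ)).exp.const_mul 3).mul (hA2.sub hA0)).div (hA0.pow 2)
      (pow_ne_zero 2 (A_pos 0 0).ne')).add_const 2).sub
        (((hasDerivAt_id (0:ℝ)).const_mul 8).div_const α)
  exact h.congr_deriv (by norm_num [A_zero])

lemma iteratedDeriv_two_B_zero (α : ℝ) :
    iteratedDeriv 2 (fun η => B η α) 0 = 16 / 15 - 8 / α := by
  rw [iteratedDeriv_succ, iteratedDeriv_one, (hasDerivAt_deriv_B_zero α).deriv]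

/-- For every `α > 0`, `B_ηη(0, α) = (16/(15α))(α − 15/2)`; in particular it is
positive for `α > 7.5`, zero for `α = 7.5`, and negative for `0 < α < 7.5`. -/
theorem stmt_8 (α : ℝ) (hα : 0 < α) :
    iteratedDeriv 2 (fun η : ℝ => B η α) 0 = 16 / (15 * α) * (α - 15 / 2) ∧
    (α > 7.5 → 0 < iteratedDeriv 2 (fun η : ℝ => B η α) 0) ∧
    (α = 7.5 → iteratedDeriv 2 (fun η : ℝ => B η α) 0 = 0) ∧
    (α < 7.5 → iteratedDeriv 2 (fun η : ℝ => B η α) 0 < 0) := by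
  have h := iteratedDeriv_two_B_zero α
  rw [show 16 / 15 - 8 / α = 16 / (15 * α) * (α - 15 / 2) by field_simp; ring] at h
  have hc : 0 < 16 / (15 * α) := by positivity
  refine ⟨h, fun h' => ?_, fun h' => ?_, fun h' => ?_⟩ <;> rw [h]
  · exact mul_pos hc (by linarith)
  · rw [h']; norm_num
  · exact mul_neg_of_pos_of_neg hc (by linarith)
end
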